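/- Let P₁, P₂, Q be plane posets, and σ : P₁·P₂ → Q a bijection, where P₁·P₂ is the composition (all elements of P₁ are <_r all elements of P₂). Set I = σ(P₂). Then σ ∈ S'(P₁·P₂, Q) if and only if I is an h-ideal of Q and the restrictions satisfy σ|_{P₁} ∈ S'(P₁, Q∖I) and σ|_{P₂} ∈ S'(P₂, I). -/
import Mathlib


/-- A plane poset: a finite set with two partial orders `leh` and `ler` such that
two distinct elements are comparable for `leh` iff they are not comparable for `ler`. -/
structure PlanePoset (α : Type) where
  leh : α → α → Prop
  ler : α → α → Prop
  leh_refl : ∀ x, leh x x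
  leh_antisymm : ∀ ⦃x y⦄, leh x y → leh y x → x = y
  leh_trans : ∀ ⦃x y z⦄, leh x y → leh y z → leh x z
  ler_refl : ∀ x, ler x x
  ler_antisymm : ∀ ⦃x y⦄, ler x y → ler y x → x = y
  ler_trans : ∀ ⦃x y z⦄, ler x y → ler y z → ler x z
  compat : ∀ x y, x ≠ y → ((leh x y ∨ leh y x) ↔ ¬(ler x y ∨ ler y x))

/-- The induced total order of a plane poset: `x ≤ y` iff `x ≤ₕ y` or `x ≤ᵣ y`. -/
def PlanePoset.le {α : Type} (P : PlanePoset α) (x y : α) : Prop :=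
  P.leh x y ∨ P.ler x y

/-- The composition `P₁ · P₂`: disjoint union, every element of `P₁` being `<ᵣ`
every element of `P₂`. -/
def PlanePoset.comp {α β : Type} (P₁ : PlanePoset α) (P₂ : PlanePoset β) :
    PlanePoset (α ⊕ β) where
  leh x y := match x, y with
    | Sum.inl a, Sum.inl b => P₁.leh a b
    | Sum.inr a, Sum.inr b => P₂.leh a b
    | _, _ => False
  ler x y := match x, y with
    | Sum.inl a, Sum.inl b => P₁.ler a b
    | Sum.inr a, Sum.inr b => P₂.ler a b
    | Sum.inl _, Sum.inr _ => True
    | Sum.inr _, Sum.inl _ => False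
  leh_refl x := by cases x with
    | inl a => exact P₁.leh_refl a
    | inr b => exact P₂.leh_refl b
  leh_antisymm x y := by
    cases x <;> cases y <;> intro h1 h2 <;> simp_all <;>
      first
        | exact P₁.leh_antisymm h1 h2
        | exact P₂.leh_antisymm h1 h2
  leh_trans x y z := by
    cases x <;> cases y <;> cases z <;> intro h1 h2 <;> simp_all <;>
      first
        | exact P₁.leh_trans h1 h2
        | exact P₂.leh_trans h1 h2
  ler_refl x := by cases x with
    | inl a => exact P₁.ler_refl a
    | inr b => exact P₂.ler_refl b
  ler_antisymm x y := by
    cases x <;> cases y <;> intro h1 h2 <;> simp_all <;>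
      first
        | exact P₁.ler_antisymm h1 h2
        | exact P₂.ler_antisymm h1 h2
  ler_trans x y z := by
    cases x <;> cases y <;> cases z <;> intro h1 h2 <;> simp_all <;>
      first
        | exact P₁.ler_trans h1 h2
        | exact P₂.ler_trans h1 h2
  compat x y hxy := by
    cases x with
    | inl a => cases y with
      | inl b => exact P₁.compat a b (fun h => hxy (congrArg Sum.inl h))
      | inr b => exact (by tauto : (False ∨ False) ↔ ¬(True ∨ False))
    | inr a => cases y with
      | inl b => exact (by tauto : (False ∨ False) ↔ ¬(False ∨ True))
      | inr b => exact P₂.compat a b (fun h => hxy (congrArg Sum.inr h))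

/-- `σ ∈ S'(P₁·P₂, Q)` iff `I = σ(P₂)` is an `h`-ideal of `Q` and the
restrictions of `σ` to `P₁` and `P₂` lie in `S'(P₁, Q∖I)` and `S'(P₂, I)`. -/
theorem stmt17 {α β γ : Type} [Fintype α] [Fintype β] [Fintype γ]
    (P₁ : PlanePoset α) (P₂ : PlanePoset β) (Q : PlanePoset γ)
    (σ : (α ⊕ β) ≃ γ) :
    ((∀ x y : α ⊕ β, (P₁.comp P₂).leh x y → Q.le (σ x) (σ y)) ∧
     (∀ x y : α ⊕ β, Q.leh (σ x) (σ y) → (P₁.comp P₂).le x y)) ↔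
      ((∀ x, x ∈ Set.range (fun b => σ (Sum.inr b)) → ∀ y, Q.leh x y →
          y ∈ Set.range (fun b => σ (Sum.inr b))) ∧
       ((∀ x y : α, P₁.leh x y → Q.le (σ (Sum.inl x)) (σ (Sum.inl y))) ∧
        (∀ x y : α, Q.leh (σ (Sum.inl x)) (σ (Sum.inl y)) → P₁.le x y)) ∧
       ((∀ x y : β, P₂.leh x y → Q.le (σ (Sum.inr x)) (σ (Sum.inr y))) ∧
        (∀ x y : β, Q.leh (σ (Sum.inr x)) (σ (Sum.inr y)) → P₂.le x y))) := by
  constructor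
  · rintro ⟨h1, h2⟩
    refine ⟨?_, ⟨?_, ?_⟩, ⟨?_, ?_⟩⟩
    · rintro x ⟨b, rfl⟩ y hy
      obtain ⟨z, rfl⟩ := σ.surjective y
      cases z with
      | inl a =>
        have := h2 _ _ hy
        rcases this with h | h <;> exact absurd h (by simp [PlanePoset.comp])
      | inr b' => exact ⟨b', rfl⟩
    · exact fun x y h => h1 (Sum.inl x) (Sum.inl y) h
    · intro x y h
      have := h2 (Sum.inl x) (Sum.inl y) h
      rcases this with h | h
      · exact Or.inl h
      · exact Or.inr h
    · exact fun x y h => h1 (Sum.inr x) (Sum.inr y) h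
    · intro x y h
      have := h2 (Sum.inr x) (Sum.inr y) h
      rcases this with h | h
      · exact Or.inl h
      · exact Or.inr h
  · rintro ⟨hideal, ⟨h1a, h1b⟩, ⟨h2a, h2b⟩⟩
    constructor
    · intro x y h
      cases x <;> cases y <;> simp [PlanePoset.comp] at h
      · exact h1a _ _ h
      · exact h2a _ _ h
    · intro x y h
      cases x with
      | inl a =>
        cases y with
        | inl a' =>
          have := h1b _ _ h
          rcases this with h' | h'
          · exact Or.inl h'
          · exact Or.inr h'
        | inr b => exact Or.inr trivial
      | inr b =>
        cases y with
        | inl a =>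
          obtain ⟨b', hb'⟩ := hideal _ ⟨b, rfl⟩ _ h
          exact absurd (σ.injective hb'.symm) (by simp)
        | inr b' =>
          have := h2b _ _ h
          rcases this with h' | h'
          · exact Or.inl h'
          · exact Or.inr h'
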